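/- arXiv:1203.2282 — 2 statements merged into one kernel-verified Lean document; each statement's English description precedes it below -/
import Mathlib

section
/- If f is differentiable on (a,b), continuous on [a,b], p > 1, and |f'|^{p/(p-1)} is quasi-convex on [a,b], then |(f(a)+f(b))/2 − (1/(b-a)) ∫_a^b f(x) dx| ≤ ((b-a)/(2(p+1)^{1/p})) · (max(|f'(a)|^{p/(p-1)}, |f'(b)|^{p/(p-1)}))^{(p-1)/p}. -/
/-!
Integrating by parts against `x - (a + b) / 2` turns the left-hand side into
`(b - a)⁻¹ |∫ (x - (a + b) / 2) f'(x) dx|`. Quasi-convexity of `|f'| ^ q`, `q = p / (p - 1)`,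
bounds `|f'|` on `[a, b]` by `K = max (|f' a| ^ q) (|f' b| ^ q) ^ (1 / q)`, and
`∫ |x - (a + b) / 2| = (b - a) ^ 2 / 4`, so the left-hand side is at most `(b - a) K / 4`.
This is sharper than the claimed bound (which comes from Hölder's inequality), because
Bernoulli's inequality `p + 1 ≤ 2 ^ p` gives `(p + 1) ^ (1 / p) ≤ 2`.
-/

open MeasureTheory intervalIntegral Set

theorem quasiconvexOn_of_le_max {β : Type*} [LinearOrder β] {s : Set ℝ} (hs : Convex ℝ s)
    {g : ℝ → β}
    (h : ∀ x ∈ s, ∀ y ∈ s, ∀ t ∈ Icc (0 : ℝ) 1, g (t * x + (1 - t) * y) ≤ max (g x) (g y)) :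
    QuasiconvexOn ℝ s g := by
  refine quasiconvexOn_iff_le_max.2 ⟨hs, fun x hx y hy t u ht _ htu => ?_⟩
  obtain rfl : u = 1 - t := by linarith
  exact h x hx y hy t ⟨ht, by linarith⟩

theorem QuasiconvexOn.le_max_of_mem_segment {𝕜 E β : Type*} [Semiring 𝕜] [PartialOrder 𝕜]
    [AddCommMonoid E] [SMul 𝕜 E] [LinearOrder β] {s : Set E} {g : E → β}
    (hg : QuasiconvexOn 𝕜 s g) {x y z : E} (hx : x ∈ s) (hy : y ∈ s) (hz : z ∈ segment 𝕜 x y) :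
    g z ≤ max (g x) (g y) :=
  ((hg _).segment_subset ⟨hx, le_max_left _ _⟩ ⟨hy, le_max_right _ _⟩ hz).2

theorem integral_sub_midpoint_mul_deriv {a b : ℝ} (hab : a ≤ b) {f f' : ℝ → ℝ}
    (hcont : ContinuousOn f (Icc a b)) (hf : ∀ x ∈ Ioo a b, HasDerivAt f (f' x) x)
    (hint : IntervalIntegrable f' volume a b) :
    ∫ x in a..b, (x - (a + b) / 2) * f' x = (b - a) / 2 * (f a + f b) - ∫ x in a..b, f x := by
  rw [integral_mul_deriv_eq_deriv_mul_of_hasDerivAt (u' := fun _ => 1)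
    (continuous_sub_right _).continuousOn (by rwa [uIcc_of_le hab])
    (fun x _ => (hasDerivAt_id x).sub_const _) (by rwa [min_eq_left hab, max_eq_right hab])
    intervalIntegrable_const hint]
  simp only [one_mul]
  ring

theorem abs_integral_sub_mul_le {a b K : ℝ} (hab : a ≤ b) {g : ℝ → ℝ}
    (hK : ∀ x ∈ Icc a b, |g x| ≤ K) (c : ℝ) :
    |∫ x in a..b, (x - c) * g x| ≤ K * ∫ x in a..b, |x - c| := by
  rw [← Real.norm_eq_abs, ← intervalIntegral.integral_const_mul]
  refine norm_integral_le_of_norm_le hab (ae_of_all _ fun x hx => ?_)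
    (((continuous_abs.comp (continuous_sub_right c)).const_mul K).intervalIntegrable a b)
  rw [Real.norm_eq_abs, abs_mul, mul_comm]
  exact mul_le_mul_of_nonneg_right (hK x (Ioc_subset_Icc_self hx)) (abs_nonneg _)

theorem integral_abs_sub_of_mem_Icc {a b c : ℝ} (hc : c ∈ Icc a b) :
    ∫ x in a..b, |x - c| = ((c - a) ^ 2 + (b - c) ^ 2) / 2 := by
  have hint : ∀ u v : ℝ, IntervalIntegrable (fun x => |x - c|) volume u v := fun u v =>
    (continuous_abs.comp (continuous_sub_right c)).intervalIntegrable u v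
  have hleft := integral_pow_abs_sub_uIoc (a := c) (b := a) 1
  have hright := integral_pow_abs_sub_uIoc (a := c) (b := b) 1
  simp only [pow_one, Nat.cast_one, Nat.reduceAdd, sq_abs] at hleft hright
  rw [← integral_add_adjacent_intervals (hint a c) (hint c b), integral_of_le hc.1,
    integral_of_le hc.2, ← uIoc_of_ge hc.1, ← uIoc_of_le hc.2, hleft, hright]
  ring

theorem add_one_rpow_one_div_le_two {p : ℝ} (hp : 1 ≤ p) : (p + 1) ^ (1 / p) ≤ 2 := by
  have hbernoulli : p + 1 ≤ 2 ^ p := by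
    simpa [add_comm, one_add_one_eq_two] using
      one_add_mul_self_le_rpow_one_add (s := 1) (by norm_num) hp
  rwa [one_div, Real.rpow_inv_le_iff_of_pos (by linarith) zero_le_two (by linarith)]

theorem ion_holder (a b : ℝ) (hab : a < b) (p : ℝ) (hp : 1 < p)
    (f f' : ℝ → ℝ)
    (hcont : ContinuousOn f (Set.Icc a b))
    (hf : ∀ x ∈ Set.Ioo a b, HasDerivAt f (f' x) x)
    (hint : IntervalIntegrable f' volume a b)
    (hquasi : ∀ x ∈ Set.Icc a b, ∀ y ∈ Set.Icc a b, ∀ t ∈ Set.Icc (0:ℝ) 1,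
      |f' (t * x + (1 - t) * y)| ^ (p / (p - 1)) ≤
        max (|f' x| ^ (p / (p - 1))) (|f' y| ^ (p / (p - 1)))) :
    |(f a + f b) / 2 - (1 / (b - a)) * ∫ x in a..b, f x| ≤
      ((b - a) / (2 * (p + 1) ^ (1 / p))) *
        (max (|f' a| ^ (p / (p - 1))) (|f' b| ^ (p / (p - 1)))) ^ ((p - 1) / p) := by
  have hq : 0 < p / (p - 1) := div_pos (by linarith) (by linarith)
  set K := (max (|f' a| ^ (p / (p - 1))) (|f' b| ^ (p / (p - 1)))) ^ ((p - 1) / p) with hK_def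
  have hquasiconvex : QuasiconvexOn ℝ (Icc a b) fun x => |f' x| ^ (p / (p - 1)) :=
    quasiconvexOn_of_le_max (convex_Icc a b) hquasi
  have hbound : ∀ x ∈ Icc a b, |f' x| ≤ K := fun x hx => by
    rw [hK_def, ← inv_div p, Real.le_rpow_inv_iff_of_pos (abs_nonneg _) (by positivity) hq]
    exact hquasiconvex.le_max_of_mem_segment (left_mem_Icc.2 hab.le) (right_mem_Icc.2 hab.le)
      (by rwa [segment_eq_Icc hab.le])
  have hest := abs_integral_sub_mul_le hab.le hbound ((a + b) / 2)
  rw [integral_abs_sub_of_mem_Icc ⟨by linarith, by linarith⟩] at hest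
  have hba : 0 < b - a := sub_pos.2 hab
  have hlhs : (f a + f b) / 2 - (1 / (b - a)) * ∫ x in a..b, f x
      = (∫ x in a..b, (x - (a + b) / 2) * f' x) / (b - a) := by
    rw [integral_sub_midpoint_mul_deriv hab.le hcont hf hint]
    field_simp
  have hK : 0 ≤ K := by positivity
  rw [hlhs, abs_div, abs_of_pos hba]
  calc |∫ x in a..b, (x - (a + b) / 2) * f' x| / (b - a)
      ≤ K * ((((a + b) / 2 - a) ^ 2 + (b - (a + b) / 2) ^ 2) / 2) / (b - a) := by gcongr
    _ = (b - a) / 4 * K := by field_simp; ring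
    _ ≤ (b - a) / (2 * (p + 1) ^ (1 / p)) * K := by
      gcongr
      linarith [add_one_rpow_one_div_le_two hp.le]
end

section
/- Let c > 0, p > 1, f differentiable on an open interval containing [a, a+c] with integrable derivative, and suppose A, B ≥ 0 satisfy |f'(a+tc)|^{p/(p-1)} ≤ (1-t)·A^{p/(p-1)} + t·B^{p/(p-1)} for all t ∈ [0,1]. Then |(1/c) ∫_a^{a+c} f(x) dx − f(a + c/2)| ≤ (c/16)·(4/(p+1))^{1/p}·[(3A^{p/(p-1)} + B^{p/(p-1)})^{(p-1)/p} + (A^{p/(p-1)} + 3B^{p/(p-1)})^{(p-1)/p}]. -/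
/-!
Integrating by parts on the two halves of `[a, a + c]` against the kernels `x - a` and
`x - (a + c)` expresses `(1/c) ∫ f - f (a + c/2)` through `∫ (x - x₀) f' x` over each half.
Hölder's inequality with exponents `p` and `q = p/(p-1)` bounds each of these by
`(∫ |x - x₀|^p)^(1/p) (∫ |f'|^q)^(1/q)`. The first factor is `((c/2)^(p+1)/(p+1))^(1/p)`, and
the hypothesis bounds `|f'|^q` by the linear interpolation between `A^q` and `B^q`, whose integrals
over the two halves are `c (3 A^q + B^q) / 8` and `c (A^q + 3 B^q) / 8`.
-/

open MeasureTheory intervalIntegral Set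

theorem abs_intervalIntegral_mul_le_Lp_mul_Lq {p q : ℝ} (hpq : p.HolderConjugate q) {u v : ℝ}
    (huv : u ≤ v) {f g : ℝ → ℝ} (hf : IntervalIntegrable f volume u v)
    (hg : IntervalIntegrable g volume u v)
    (hfp : IntervalIntegrable (fun x ↦ |f x| ^ p) volume u v)
    (hgq : IntervalIntegrable (fun x ↦ |g x| ^ q) volume u v) :
    |∫ x in u..v, f x * g x| ≤
      (∫ x in u..v, |f x| ^ p) ^ (1 / p) * (∫ x in u..v, |g x| ^ q) ^ (1 / q) := by
  have memLp {r : ℝ} (hr : 0 < r) {h : ℝ → ℝ} (hh : IntervalIntegrable h volume u v)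
      (hhr : IntervalIntegrable (fun x ↦ |h x| ^ r) volume u v) :
      MemLp h (ENNReal.ofReal r) (volume.restrict (Ioc u v)) := by
    rw [← integrable_norm_rpow_iff hh.aestronglyMeasurable (by simpa using hr)
      ENNReal.ofReal_ne_top, ENNReal.toReal_ofReal hr.le]
    exact (intervalIntegrable_iff_integrableOn_Ioc_of_le huv).1 hhr
  simp only [integral_of_le huv]
  calc |∫ x in Ioc u v, f x * g x|
      ≤ ∫ x in Ioc u v, ‖f x‖ * ‖g x‖ := by
        simpa only [Real.norm_eq_abs, abs_mul] using
          MeasureTheory.abs_integral_le_integral_abs (f := fun x ↦ f x * g x)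
    _ ≤ _ := integral_mul_norm_le_Lp_mul_Lq hpq (memLp hpq.pos hf hfp)
        (memLp hpq.symm.pos hg hgq)
    _ = _ := by simp only [Real.norm_eq_abs]

theorem abs_intervalIntegral_mul_le_of_abs_rpow_le {p q : ℝ} (hpq : p.HolderConjugate q)
    {u v : ℝ} (huv : u ≤ v) {w g φ : ℝ → ℝ} (hw : ContinuousOn w (Icc u v))
    (hg : IntervalIntegrable g volume u v) (hφ : IntervalIntegrable φ volume u v)
    (hgφ : ∀ x ∈ Icc u v, |g x| ^ q ≤ φ x) :
    |∫ x in u..v, w x * g x| ≤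
      (∫ x in u..v, |w x| ^ p) ^ (1 / p) * (∫ x in u..v, φ x) ^ (1 / q) := by
  have hgq : IntervalIntegrable (fun x ↦ |g x| ^ q) volume u v := by
    refine hφ.mono_fun' ?_ ?_ <;> rw [uIoc_of_le huv]
    · exact ((Real.continuous_rpow_const hpq.symm.nonneg).comp
        continuous_abs).comp_aestronglyMeasurable hg.aestronglyMeasurable
    · refine (ae_restrict_iff' measurableSet_Ioc).2 (.of_forall fun x hx ↦ ?_)
      dsimp only
      rw [Real.norm_of_nonneg (by positivity)]
      exact hgφ x (Ioc_subset_Icc_self hx)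
  have hwp : IntervalIntegrable (fun x ↦ |w x| ^ p) volume u v :=
    (hw.abs.rpow_const fun _ _ ↦ Or.inr hpq.nonneg).intervalIntegrable_of_Icc huv
  refine (abs_intervalIntegral_mul_le_Lp_mul_Lq hpq huv (hw.intervalIntegrable_of_Icc huv) hg hwp
    hgq).trans ?_
  have hwp_nonneg : 0 ≤ ∫ x in u..v, |w x| ^ p := integral_nonneg huv fun _ _ ↦ by positivity
  have hgq_nonneg : 0 ≤ ∫ x in u..v, |g x| ^ q := integral_nonneg huv fun _ _ ↦ by positivity
  gcongr
  · exact hpq.symm.one_div_nonneg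
  · exact integral_mono_on huv hgq hφ hgφ

theorem integral_abs_rpow_of_nonneg {h r : ℝ} (hh : 0 ≤ h) (hr : -1 < r) :
    ∫ x in (0 : ℝ)..h, |x| ^ r = h ^ (r + 1) / (r + 1) := by
  rw [integral_congr fun x hx ↦ by rw [abs_of_nonneg (uIcc_of_le hh ▸ hx).1],
    integral_rpow (.inl hr), Real.zero_rpow (by linarith), sub_zero]

theorem integral_abs_sub_left_rpow {u v r : ℝ} (huv : u ≤ v) (hr : -1 < r) :
    ∫ x in u..v, |x - u| ^ r = (v - u) ^ (r + 1) / (r + 1) := by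
  rw [integral_comp_sub_right (fun x ↦ |x| ^ r), sub_self]
  exact integral_abs_rpow_of_nonneg (sub_nonneg.2 huv) hr

theorem integral_abs_sub_right_rpow {u v r : ℝ} (huv : u ≤ v) (hr : -1 < r) :
    ∫ x in u..v, |x - v| ^ r = (v - u) ^ (r + 1) / (r + 1) := by
  simp_rw [abs_sub_comm _ v]
  rw [integral_comp_sub_left (fun x ↦ |x| ^ r), sub_self]
  exact integral_abs_rpow_of_nonneg (sub_nonneg.2 huv) hr

theorem abs_integral_sub_endpoint_mul_le {p : ℝ} (hp : 1 < p) {u v x₀ : ℝ} (huv : u ≤ v)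
    (hx₀ : x₀ = u ∨ x₀ = v) {g φ : ℝ → ℝ} (hg : IntervalIntegrable g volume u v)
    (hφ : IntervalIntegrable φ volume u v)
    (hgφ : ∀ x ∈ Icc u v, |g x| ^ (p / (p - 1)) ≤ φ x) :
    |∫ x in u..v, (x - x₀) * g x| ≤
      ((v - u) ^ (p + 1) / (p + 1)) ^ (1 / p) * (∫ x in u..v, φ x) ^ ((p - 1) / p) := by
  have hpq : p.HolderConjugate (p / (p - 1)) := .conjExponent hp
  have hweight : ∫ x in u..v, |x - x₀| ^ p = (v - u) ^ (p + 1) / (p + 1) := by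
    rcases hx₀ with rfl | rfl
    exacts [integral_abs_sub_left_rpow huv (by linarith),
      integral_abs_sub_right_rpow huv (by linarith)]
  have := abs_intervalIntegral_mul_le_of_abs_rpow_le hpq huv (w := (· - x₀)) (by fun_prop)
    hg hφ hgφ
  rwa [hweight, one_div_div] at this

theorem half_interval_bound_eq {c p S : ℝ} (hc : 0 < c) (hp : 1 < p) (hS : 0 ≤ S) :
    ((c / 2) ^ (p + 1) / (p + 1)) ^ (1 / p) * (c / 8 * S) ^ ((p - 1) / p) =
      c ^ 2 / 16 * (4 / (p + 1)) ^ (1 / p) * S ^ ((p - 1) / p) := by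
  have hp0 : p ≠ 0 := by positivity
  have hleft :
      ((c / 2) ^ (p + 1) / (p + 1)) ^ (1 / p) = c / 2 * (c / 2 / (p + 1)) ^ (1 / p) := by
    rw [Real.rpow_add_one (by positivity), mul_div_assoc, Real.mul_rpow (by positivity)
      (by positivity), ← Real.rpow_mul (by positivity), mul_one_div_cancel hp0, Real.rpow_one]
  have hright : (c / 8) ^ ((p - 1) / p) = c / 8 / (c / 8) ^ (1 / p) := by
    rw [show (p - 1) / p = 1 - 1 / p by field_simp, Real.rpow_sub (by positivity), Real.rpow_one]
  have hratio : (c / 2 / (p + 1)) / (c / 8) = 4 / (p + 1) := by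
    field_simp
    ring
  rw [Real.mul_rpow (by positivity) hS, hleft, hright, ← hratio,
    Real.div_rpow (x := c / 2 / (p + 1)) (by positivity) (by positivity)]
  have hy : (c / 8) ^ (1 / p) ≠ 0 := by positivity
  generalize (c / 8) ^ (1 / p) = y at hy ⊢
  generalize (c / 2 / (p + 1)) ^ (1 / p) = x
  field_simp
  ring

theorem abs_integral_sub_endpoint_mul_le_of_half_interval {p c S : ℝ} (hp : 1 < p)
    (hc : 0 < c) (hS : 0 ≤ S) {u v x₀ : ℝ} (huv : v - u = c / 2)
    (hx₀ : x₀ = u ∨ x₀ = v) {g φ : ℝ → ℝ}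
    (hg : IntervalIntegrable g volume u v) (hφ : IntervalIntegrable φ volume u v)
    (hgφ : ∀ x ∈ Icc u v, |g x| ^ (p / (p - 1)) ≤ φ x)
    (hφS : ∫ x in u..v, φ x = c / 8 * S) :
    |∫ x in u..v, (x - x₀) * g x| ≤
      c ^ 2 / 16 * (4 / (p + 1)) ^ (1 / p) * S ^ ((p - 1) / p) := by
  have := abs_integral_sub_endpoint_mul_le hp (by linarith) hx₀ hg hφ hgφ
  rwa [huv, hφS, half_interval_bound_eq hc hp hS] at this

theorem integral_linear_interpolation_eq_mul_midpoint (a c P Q u v : ℝ) (hc : c ≠ 0) :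
    ∫ x in u..v, ((1 - (x - a) / c) * P + (x - a) / c * Q) =
      (v - u) * ((1 - ((u + v) / 2 - a) / c) * P + ((u + v) / 2 - a) / c * Q) := by
  have : (fun x ↦ (1 - (x - a) / c) * P + (x - a) / c * Q) =
      fun x ↦ (P - a * ((Q - P) / c)) + (Q - P) / c * x := by
    funext x; field_simp; ring
  rw [this, integral_add intervalIntegrable_const (intervalIntegrable_id.const_mul _),
    intervalIntegral.integral_const_mul, intervalIntegral.integral_const, integral_id,
    smul_eq_mul]
  field_simp
  ring

theorem integral_linear_interpolation_left_half (a P Q : ℝ) {c : ℝ} (hc : c ≠ 0) :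
    ∫ x in a..a + c / 2, ((1 - (x - a) / c) * P + (x - a) / c * Q) =
      c / 8 * (3 * P + Q) := by
  rw [integral_linear_interpolation_eq_mul_midpoint _ _ _ _ _ _ hc]
  field_simp
  ring

theorem integral_linear_interpolation_right_half (a P Q : ℝ) {c : ℝ} (hc : c ≠ 0) :
    ∫ x in a + c / 2..a + c, ((1 - (x - a) / c) * P + (x - a) / c * Q) =
      c / 8 * (P + 3 * Q) := by
  rw [integral_linear_interpolation_eq_mul_midpoint _ _ _ _ _ _ hc]
  field_simp
  ring

theorem integral_sub_mul_deriv_eq {f f' : ℝ → ℝ} {u v : ℝ}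
    (hf : ∀ x ∈ uIcc u v, HasDerivAt f (f' x) x) (hf' : IntervalIntegrable f' volume u v)
    (x₀ : ℝ) :
    ∫ x in u..v, (x - x₀) * f' x =
      (v - x₀) * f v - (u - x₀) * f u - ∫ x in u..v, f x := by
  simpa using integral_mul_deriv_eq_deriv_mul (fun x _ ↦ (hasDerivAt_id x).sub_const x₀) hf
    intervalIntegrable_const hf'

theorem integral_eq_sub_mul_sub_integral_sub_mul_deriv {f f' : ℝ → ℝ} {u m v : ℝ}
    (hum : u ≤ m) (hmv : m ≤ v) (hf : ∀ x ∈ Icc u v, HasDerivAt f (f' x) x)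
    (hf' : IntervalIntegrable f' volume u v) :
    ∫ x in u..v, f x =
      (v - u) * f m - ((∫ x in u..m, (x - u) * f' x) + ∫ x in m..v, (x - v) * f' x) := by
  have hsub_left : uIcc u m ⊆ uIcc u v := uIcc_subset_uIcc_left (mem_uIcc_of_le hum hmv)
  have hsub_right : uIcc m v ⊆ uIcc u v := uIcc_subset_uIcc_right (mem_uIcc_of_le hum hmv)
  have hf_uIcc : ∀ x ∈ uIcc u v, HasDerivAt f (f' x) x := by
    rwa [uIcc_of_le (hum.trans hmv)]
  have hcont : ContinuousOn f (uIcc u v) := fun x hx ↦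
    (hf_uIcc x hx).continuousAt.continuousWithinAt
  rw [integral_sub_mul_deriv_eq (fun x hx ↦ hf_uIcc x (hsub_left hx)) (hf'.mono_set hsub_left),
    integral_sub_mul_deriv_eq (fun x hx ↦ hf_uIcc x (hsub_right hx)) (hf'.mono_set hsub_right),
    ← integral_add_adjacent_intervals ((hcont.mono hsub_left).intervalIntegrable)
      ((hcont.mono hsub_right).intervalIntegrable)]
  ring

theorem phi_convex_midpoint_holder (a c A B p : ℝ) (hc : 0 < c) (hp : 1 < p)
    (hA : 0 ≤ A) (hB : 0 ≤ B) (f f' : ℝ → ℝ)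
    (hf : ∀ x ∈ Set.Icc a (a + c), HasDerivAt f (f' x) x)
    (hint : IntervalIntegrable f' volume a (a + c))
    (hbound : ∀ t ∈ Set.Icc (0:ℝ) 1,
      |f' (a + t * c)| ^ (p / (p - 1)) ≤ (1 - t) * A ^ (p / (p - 1)) + t * B ^ (p / (p - 1))) :
    |(1 / c) * (∫ x in a..(a + c), f x) - f (a + c / 2)| ≤
      (c / 16) * (4 / (p + 1)) ^ (1 / p) *
        ((3 * A ^ (p / (p - 1)) + B ^ (p / (p - 1))) ^ ((p - 1) / p) +
          (A ^ (p / (p - 1)) + 3 * B ^ (p / (p - 1))) ^ ((p - 1) / p)) := by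
  set q := p / (p - 1)
  set φ : ℝ → ℝ := fun x ↦ (1 - (x - a) / c) * A ^ q + (x - a) / c * B ^ q
  have hφ : ∀ x ∈ Icc a (a + c), |f' x| ^ q ≤ φ x := fun x hx ↦ by
    have ht : (x - a) / c ∈ Icc (0 : ℝ) 1 := by
      rw [mem_Icc, le_div_iff₀ hc, div_le_iff₀ hc]; constructor <;> linarith [hx.1, hx.2]
    simpa only [φ, div_mul_cancel₀ _ hc.ne', add_sub_cancel] using hbound _ ht
  have hφi : ∀ u v, IntervalIntegrable φ volume u v := fun u v ↦ by
    apply Continuous.intervalIntegrable; fun_prop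
  have hm : a + c / 2 ∈ uIcc a (a + c) := mem_uIcc_of_le (by linarith) (by linarith)
  have hleft := abs_integral_sub_endpoint_mul_le_of_half_interval hp hc (by positivity) (by ring)
    (.inl rfl) (hint.mono_set (uIcc_subset_uIcc_left hm)) (hφi _ _)
    (fun x hx ↦ hφ x ⟨hx.1, by linarith [hx.2]⟩)
    (integral_linear_interpolation_left_half _ _ _ hc.ne')
  have hright := abs_integral_sub_endpoint_mul_le_of_half_interval hp hc (by positivity) (by ring)
    (.inr rfl) (hint.mono_set (uIcc_subset_uIcc_right hm)) (hφi _ _)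
    (fun x hx ↦ hφ x ⟨by linarith [hx.1], hx.2⟩)
    (integral_linear_interpolation_right_half _ _ _ hc.ne')
  have hidentity : (1 / c) * (∫ x in a..(a + c), f x) - f (a + c / 2) =
      -(1 / c) * ((∫ x in a..a + c / 2, (x - a) * f' x) +
        ∫ x in a + c / 2..a + c, (x - (a + c)) * f' x) := by
    rw [integral_eq_sub_mul_sub_integral_sub_mul_deriv (m := a + c / 2) (by linarith)
      (by linarith) hf hint]
    field_simp
    ring
  rw [hidentity, abs_mul, abs_neg, abs_of_pos (by positivity)]
  refine (mul_le_mul_of_nonneg_left ((abs_add_le _ _).trans (add_le_add hleft hright))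
    (by positivity)).trans_eq ?_
  field_simp
end
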